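/- Every u ∈ S^m (fuzzy star-shaped number with compact support) is p-mean left-continuous: for every ε > 0 there exists δ > 0 such that for all 0 ≤ h < δ, (∫_h¹ H([u]_α, [u]_{α−h})^p dα)^{1/p} < ε. -/

import Mathlib

open Set Metric MeasureTheory

def cut {m : ℕ} (u : EuclideanSpace ℝ (Fin m) → ℝ) (α : ℝ) :
    Set (EuclideanSpace ℝ (Fin m)) := {x | α ≤ u x}

/-- `u` is a fuzzy star-shaped number with compact support (`u ∈ Sᵐ`). -/
def IsFSN {m : ℕ} (u : EuclideanSpace ℝ (Fin m) → ℝ) : Prop :=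
  (∀ x, u x ∈ Set.Icc (0:ℝ) 1) ∧ (∃ x, u x = 1) ∧ UpperSemicontinuous u ∧
  (∀ α ∈ Set.Ioc (0:ℝ) 1, ∃ x ∈ cut u α, StarConvex ℝ x (cut u α)) ∧
  IsCompact (closure {x | 0 < u x})

/-- The `L_p` distance between fuzzy sets via Hausdorff distance of level cuts. -/
noncomputable def dp {m : ℕ} (p : ℝ) (u v : EuclideanSpace ℝ (Fin m) → ℝ) : ℝ :=
  (∫ α in Set.Ioc (0:ℝ) 1, hausdorffDist (cut u α) (cut v α) ^ p) ^ (1/p)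

/-!
For `α > 0` the cut `[u]_α` is compact and equals `⋂_{β<α} [u]_β`, so the cuts `[u]_β` with
`β ↑ α` eventually lie in every `ε`-thickening of `[u]_α`. Hence `H([u]_α, [u]_{α-h}) → 0` for
every `α` as `h → 0⁺`, with the diameter of the support as a uniform bound, and dominated
convergence gives the claim. The integrand is measurable because for nested sets `A ⊆ B` and a
dense sequence `(e k)`, `H(A, B) = ⨆ k, (d(e k, A) - d(e k, B))`, and each `α ↦ d(x, [u]_α)` is
monotone on `α ≤ 1`.
-/

open Filter Topology Bornology

theorem hausdorffDist_eq_iSup_infDist_sub {X ι : Type*} [PseudoMetricSpace X] {A B : Set X}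
    {e : ι → X} (he : DenseRange e) (hA : A.Nonempty) (hB : IsBounded B) (hAB : A ⊆ B) :
    hausdorffDist A B = ⨆ k, (infDist (e k) A - infDist (e k) B) := by
  have hfin : hausdorffEDist B A ≠ ⊤ :=
    hausdorffEDist_ne_top_of_nonempty_of_bounded (hA.mono hAB) hA hB (hB.subset hAB)
  have hle : ∀ x, infDist x A - infDist x B ≤ hausdorffDist A B := fun x => by
    have := infDist_le_infDist_add_hausdorffDist (x := x) hfin
    rw [hausdorffDist_comm] at this
    linarith
  have hnonneg : ∀ x, 0 ≤ infDist x A - infDist x B := fun x =>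
    sub_nonneg.2 (infDist_le_infDist_of_subset hAB hA)
  have hbdd : BddAbove (range fun k => infDist (e k) A - infDist (e k) B) :=
    ⟨_, forall_mem_range.2 fun k => hle (e k)⟩
  refine le_antisymm (hausdorffDist_le_of_infDist (Real.iSup_nonneg fun k => hnonneg _) ?_ ?_)
    (Real.iSup_le (fun k => hle _) hausdorffDist_nonneg)
  · intro x hx
    rw [infDist_zero_of_mem (hAB hx)]
    exact Real.iSup_nonneg fun k => hnonneg _
  · intro x hx
    have : infDist x A - infDist x B ≤ ⨆ k, (infDist (e k) A - infDist (e k) B) :=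
      he.induction_on x (isClosed_le ((continuous_infDist_pt A).sub (continuous_infDist_pt B))
        continuous_const) fun k => le_ciSup hbdd k
    rwa [infDist_zero_of_mem hx, sub_zero] at this

section Cut

variable {m : ℕ} {u : EuclideanSpace ℝ (Fin m) → ℝ}

theorem cut_antitone : Antitone (cut u) := fun _ _ hst _ hx => hst.trans hx

theorem cut_nonempty (h1 : (cut u 1).Nonempty) {t : ℝ} (ht : t ≤ 1) : (cut u t).Nonempty :=
  h1.mono (cut_antitone ht)

theorem isClosed_cut (husc : UpperSemicontinuous u) (t : ℝ) : IsClosed (cut u t) :=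
  husc.isClosed_preimage t

theorem cut_subset_closure_support {t : ℝ} (ht : 0 < t) : cut u t ⊆ closure {x | 0 < u x} :=
  fun _ hx => subset_closure (ht.trans_le hx)

theorem isBounded_cut (hsupp : IsCompact (closure {x | 0 < u x})) {t : ℝ} (ht : 0 < t) :
    IsBounded (cut u t) :=
  hsupp.isBounded.subset (cut_subset_closure_support ht)

theorem isCompact_cut (husc : UpperSemicontinuous u) (hsupp : IsCompact (closure {x | 0 < u x}))
    {t : ℝ} (ht : 0 < t) : IsCompact (cut u t) :=
  hsupp.of_isClosed_subset (isClosed_cut husc t) (cut_subset_closure_support ht)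

theorem hausdorffDist_cut_le_diam (h1 : (cut u 1).Nonempty)
    (hsupp : IsCompact (closure {x | 0 < u x})) {s t : ℝ} (hs : 0 < s) (hs1 : s ≤ 1)
    (ht : 0 < t) (ht1 : t ≤ 1) :
    hausdorffDist (cut u s) (cut u t) ≤ diam (closure {x | 0 < u x}) :=
  (hausdorffDist_le_diam (cut_nonempty h1 hs1) (isBounded_cut hsupp hs) (cut_nonempty h1 ht1)
    (isBounded_cut hsupp ht)).trans
    (diam_mono (union_subset (cut_subset_closure_support hs) (cut_subset_closure_support ht))
      hsupp.isBounded)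

theorem iInter_cut_Ioo {α : ℝ} (hα : 0 < α) : ⋂ β : Ioo (0:ℝ) α, cut u β = cut u α := by
  refine Subset.antisymm (fun x hx => ?_) (subset_iInter fun β => cut_antitone β.2.2.le)
  rw [mem_iInter] at hx
  refine le_of_forall_lt_imp_le_of_dense fun β hβ => (le_max_left β (α / 2)).trans ?_
  exact hx ⟨max β (α / 2), lt_max_of_lt_right (half_pos hα), max_lt hβ (half_lt_self hα)⟩

theorem exists_cut_subset_of_isOpen (husc : UpperSemicontinuous u)
    (hsupp : IsCompact (closure {x | 0 < u x})) {α : ℝ} (hα : 0 < α)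
    {U : Set (EuclideanSpace ℝ (Fin m))} (hU : IsOpen U) (hαU : cut u α ⊆ U) :
    ∃ β ∈ Ioo 0 α, cut u β ⊆ U := by
  have : Nonempty (Ioo (0:ℝ) α) := ⟨⟨α / 2, half_pos hα, half_lt_self hα⟩⟩
  obtain ⟨β, hβU⟩ := exists_subset_nhds_of_isCompact' (V := fun β : Ioo (0:ℝ) α => cut u β)
    (fun i j => ⟨⟨max i j, lt_max_of_lt_left i.2.1, max_lt i.2.2 j.2.2⟩,
      cut_antitone (le_max_left _ _), cut_antitone (le_max_right _ _)⟩)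
    (fun β => isCompact_cut husc hsupp β.2.1) (fun β => isClosed_cut husc β)
    (fun x hx => hU.mem_nhds (hαU ((iInter_cut_Ioo hα).subset hx)))
  exact ⟨β, β.2, hβU⟩

theorem tendsto_hausdorffDist_cut_sub (husc : UpperSemicontinuous u)
    (hsupp : IsCompact (closure {x | 0 < u x})) {α : ℝ} (hα : 0 < α) :
    Tendsto (fun h => hausdorffDist (cut u α) (cut u (α - h))) (𝓝[≥] 0) (𝓝 0) := by
  rw [Metric.tendsto_nhds]
  intro ε hε
  obtain ⟨β, hβ, hβε⟩ := exists_cut_subset_of_isOpen husc hsupp hα isOpen_thickening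
    (self_subset_thickening (half_pos hε) _)
  filter_upwards [self_mem_nhdsWithin, nhdsWithin_le_nhds (Iio_mem_nhds (sub_pos.2 hβ.2))]
    with h (hh : 0 ≤ h) (hhβ : h < α - β)
  rw [dist_zero_right, Real.norm_of_nonneg hausdorffDist_nonneg]
  refine (hausdorffDist_le_of_mem_dist (half_pos hε).le
    (fun x hx => ⟨x, cut_antitone (by linarith) hx, (dist_self x).trans_le (half_pos hε).le⟩) fun x hx => ?_).trans_lt
    (half_lt_self hε)
  obtain ⟨y, hy, hxy⟩ := mem_thickening_iff.1 (hβε (cut_antitone (by linarith) hx))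
  exact ⟨y, hy, hxy.le⟩

theorem monotoneOn_infDist_cut (h1 : (cut u 1).Nonempty) (x : EuclideanSpace ℝ (Fin m)) :
    MonotoneOn (fun t => infDist x (cut u t)) (Iic 1) :=
  fun _ _ _ ht1 hst => infDist_le_infDist_of_subset (cut_antitone hst) (cut_nonempty h1 ht1)

theorem aemeasurable_hausdorffDist_cut_sub (h1 : (cut u 1).Nonempty)
    (hsupp : IsCompact (closure {x | 0 < u x})) {h : ℝ} (hh : 0 ≤ h) :
    AEMeasurable (fun α => hausdorffDist (cut u α) (cut u (α - h))) (volume.restrict (Ioc h 1)) := by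
  obtain ⟨e, he⟩ := TopologicalSpace.exists_dense_seq (EuclideanSpace ℝ (Fin m))
  have hsub : Ioc h 1 ⊆ Iic 1 := fun α hα => hα.2
  have hsub' : MapsTo (· - h) (Ioc h 1) (Iic 1) := fun α hα => by
    simp only [mem_Iic]; linarith [hα.2]
  refine (AEMeasurable.iSup fun k => (aemeasurable_restrict_of_monotoneOn measurableSet_Ioc
    ((monotoneOn_infDist_cut h1 (e k)).mono hsub)).sub (aemeasurable_restrict_of_monotoneOn
    measurableSet_Ioc ((monotoneOn_infDist_cut h1 (e k)).comp
      (fun a _ b _ hab => sub_le_sub_right hab h) hsub'))).congr ?_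
  filter_upwards [ae_restrict_mem measurableSet_Ioc] with α hα
  exact (hausdorffDist_eq_iSup_infDist_sub he (cut_nonempty h1 hα.2)
    (isBounded_cut hsupp (sub_pos.2 hα.1)) (cut_antitone (by linarith))).symm

theorem tendsto_setIntegral_hausdorffDist_cut_sub_rpow {p : ℝ} (hp : 0 < p)
    (h1 : (cut u 1).Nonempty) (husc : UpperSemicontinuous u)
    (hsupp : IsCompact (closure {x | 0 < u x})) :
    Tendsto (fun h => ∫ α in Ioc h 1, hausdorffDist (cut u α) (cut u (α - h)) ^ p)
      (𝓝[≥] 0) (𝓝 0) := by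
  set F : ℝ → ℝ → ℝ := fun h =>
    (Ioc h 1).indicator fun α => hausdorffDist (cut u α) (cut u (α - h)) ^ p
  have hF : ∀ h ∈ Ici (0:ℝ), ∫ α in Ioc 0 1, F h α =
      ∫ α in Ioc h 1, hausdorffDist (cut u α) (cut u (α - h)) ^ p := fun h hh => by
    rw [setIntegral_indicator measurableSet_Ioc, inter_eq_right.2 (Ioc_subset_Ioc_left hh)]
  have hmeas : ∀ᶠ h in 𝓝[≥] 0, AEStronglyMeasurable (F h) (volume.restrict (Ioc 0 1)) := by
    filter_upwards [self_mem_nhdsWithin] with h (hh : 0 ≤ h)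
    refine (aestronglyMeasurable_indicator_iff measurableSet_Ioc).2 ?_
    rw [Measure.restrict_restrict measurableSet_Ioc, inter_eq_left.2 (Ioc_subset_Ioc_left hh)]
    exact ((aemeasurable_hausdorffDist_cut_sub h1 hsupp hh).pow_const p).aestronglyMeasurable
  have hbound : ∀ᶠ h in 𝓝[≥] 0, ∀ᵐ α ∂volume.restrict (Ioc 0 1),
      ‖F h α‖ ≤ diam (closure {x | 0 < u x}) ^ p := by
    filter_upwards [self_mem_nhdsWithin] with h (hh : 0 ≤ h)
    filter_upwards [ae_restrict_mem measurableSet_Ioc] with α hα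
    simp only [F]
    by_cases hαh : α ∈ Ioc h 1
    · rw [indicator_of_mem hαh, Real.norm_of_nonneg (Real.rpow_nonneg hausdorffDist_nonneg p)]
      exact Real.rpow_le_rpow hausdorffDist_nonneg (hausdorffDist_cut_le_diam h1 hsupp hα.1 hα.2
        (sub_pos.2 hαh.1) (by linarith [hα.2])) hp.le
    · rw [indicator_of_notMem hαh, norm_zero]
      positivity
  have hlim : ∀ᵐ α ∂volume.restrict (Ioc 0 1), Tendsto (F · α) (𝓝[≥] 0) (𝓝 0) := by
    filter_upwards [ae_restrict_mem measurableSet_Ioc] with α hα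
    have := (tendsto_hausdorffDist_cut_sub husc hsupp hα.1).rpow_const (p := p) (Or.inr hp.le)
    rw [Real.zero_rpow hp.ne'] at this
    refine this.congr' ?_
    filter_upwards [nhdsWithin_le_nhds (Iio_mem_nhds hα.1)] with h (hh : h < α)
    simp only [F, indicator_of_mem (show α ∈ Ioc h 1 from ⟨hh, hα.2⟩)]
  have := tendsto_integral_filter_of_dominated_convergence _ hmeas hbound
    (integrableOn_const measure_Ioc_lt_top.ne) hlim
  rw [integral_zero] at this
  exact this.congr' (eventually_nhdsWithin_of_forall hF)

end Cut

theorem p_mean_left_continuous {m : ℕ} (p : ℝ) (hp : 1 ≤ p)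
    (u : EuclideanSpace ℝ (Fin m) → ℝ) (hu : IsFSN u) :
    ∀ ε > (0:ℝ), ∃ δ > (0:ℝ), ∀ h : ℝ, 0 ≤ h → h < δ →
      (∫ α in Set.Ioc h 1, hausdorffDist (cut u α) (cut u (α - h)) ^ p) ^ (1/p) < ε := by
  intro ε hε
  obtain ⟨-, ⟨x, hx⟩, husc, -, hsupp⟩ := hu
  have hp0 : 0 < p := one_pos.trans_le hp
  have hlim := (tendsto_setIntegral_hausdorffDist_cut_sub_rpow hp0 ⟨x, hx.ge⟩ husc hsupp).rpow_const
    (p := 1 / p) (Or.inr (by positivity))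
  rw [Real.zero_rpow (by positivity)] at hlim
  obtain ⟨δ, hδ, hδε⟩ := (nhdsGE_basis 0).eventually_iff.1 (hlim.eventually (gt_mem_nhds hε))
  exact ⟨δ, hδ, fun h hh hhδ => hδε ⟨hh, hhδ⟩⟩
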